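/- arXiv:0706.0403 — 3 statements merged into one kernel-verified Lean document; each statement's English description precedes it below -/
import Mathlib

section
/- Let G be a distribution on (0,∞) with density g, finite positive mean E[U] with μ = 1/E[U], and unbounded support (Ḡ(t) > 0 for all t). For each t > 0 with G(t) > 0, let γ(t) be the unique positive root of ∫_0^t e^{γ y} g(y) dy = 1. Then γ(t) ~ μ Ḡ(t) as t → ∞. -/
open MeasureTheory Filter Real Set
open scoped Topology

/-!
With `I t = ∫_{(0,t]} y g(y) dy`, the root equation reads `∫_{(0,t]} (e^{γ y} - 1) g(y) dy = Ḡ(t)`,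
and `x ≤ eˣ - 1 ≤ x eˣ` turns it into `γ I(t) ≤ Ḡ(t) ≤ γ e^{γ t} I(t)`. Finiteness of the mean
gives `t Ḡ(t) ≤ ∫_t^∞ y g(y) dy → 0` and `I(t) → 1/μ`, so the lower bound forces `γ(t) t → 0`;
hence `e^{γ t} → 1` and the two bounds squeeze `γ I(t) / Ḡ(t)` to `1`.
-/

lemma Real.exp_sub_one_le_mul_exp (x : ℝ) : exp x - 1 ≤ x * exp x := by
  have h := mul_le_mul_of_nonneg_right (add_one_le_exp (-x)) (exp_pos x).le
  rw [← exp_add, neg_add_cancel, exp_zero] at h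
  linarith

lemma tendsto_div_of_le_of_le_mul_exp {α : Type*} {l : Filter α} {u v ε : α → ℝ}
    (hv : ∀ᶠ x in l, 0 < v x) (huv : ∀ᶠ x in l, u x ≤ v x)
    (hvu : ∀ᶠ x in l, v x ≤ u x * exp (ε x)) (hε : Tendsto ε l (𝓝 0)) :
    Tendsto (fun x => u x / v x) l (𝓝 1) := by
  have hlim : Tendsto (fun x => exp (-ε x)) l (𝓝 1) := by
    have hε' : Tendsto (fun x => -ε x) l (𝓝 0) := by simpa using hε.neg
    exact tendsto_exp_nhds_zero_nhds_one.comp hε'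
  refine tendsto_of_tendsto_of_tendsto_of_le_of_le' hlim tendsto_const_nhds ?_ ?_
  · filter_upwards [hv, hvu] with x hvx hvux
    rw [le_div_iff₀ hvx, exp_neg, inv_mul_le_iff₀ (exp_pos _), mul_comm]
    exact hvux
  · filter_upwards [hv, huv] with x hvx huvx
    exact (div_le_one hvx).2 huvx

lemma tendsto_mul_id_of_mul_le {γ I G : ℝ → ℝ} {m : ℝ} (hm : 0 < m)
    (hI : Tendsto I atTop (𝓝 m)) (hG : Tendsto (fun t => t * G t) atTop (𝓝 0))
    (hγ : ∀ᶠ t in atTop, 0 ≤ γ t) (hle : ∀ᶠ t in atTop, γ t * I t ≤ G t) :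
    Tendsto (fun t => γ t * t) atTop (𝓝 0) := by
  have hbound : Tendsto (fun t => t * G t / I t) atTop (𝓝 0) := by
    have h := hG.div hI hm.ne'
    rwa [zero_div] at h
  refine squeeze_zero' ?_ ?_ hbound
  · filter_upwards [eventually_ge_atTop 0, hγ] with t ht hγt using mul_nonneg hγt ht
  · filter_upwards [eventually_ge_atTop 0, hI.eventually (eventually_gt_nhds hm), hle]
      with t ht hIt hlet
    rw [le_div_iff₀ hIt, mul_right_comm, mul_comm t]
    exact mul_le_mul_of_nonneg_right hlet ht

section SetIntegral

variable {f g : ℝ → ℝ} {a t : ℝ}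

lemma MeasureTheory.IntegrableOn.continuous_mul_Ioc {φ : ℝ → ℝ} (hφ : Continuous φ)
    (hg : IntegrableOn g (Ioc a t)) : IntegrableOn (fun y => φ y * g y) (Ioc a t) :=
  hg.continuousOn_mul_of_subset hφ.continuousOn isCompact_Icc measurableSet_Ioc
    Ioc_subset_Icc_self

lemma integral_Ioc_add_integral_Ioi (hf : IntegrableOn f (Ioi a)) (hat : a ≤ t) :
    (∫ y in Ioc a t, f y) + ∫ y in Ioi t, f y = ∫ y in Ioi a, f y := by
  rw [← intervalIntegral.integral_of_le hat]
  exact intervalIntegral.integral_interval_add_Ioi hf (hf.mono_set (Ioi_subset_Ioi hat))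

lemma tendsto_integral_Ioc_atTop (hf : IntegrableOn f (Ioi a)) :
    Tendsto (fun t => ∫ y in Ioc a t, f y) atTop (𝓝 (∫ y in Ioi a, f y)) := by
  refine (intervalIntegral_tendsto_integral_Ioi a hf tendsto_id).congr' ?_
  filter_upwards [eventually_ge_atTop a] with t hat
  exact intervalIntegral.integral_of_le hat

lemma mul_integral_Ioi_le_integral_Ioi_mul (hg0 : ∀ y, 0 ≤ g y) (hg : IntegrableOn g (Ioi t))
    (hyg : IntegrableOn (fun y => y * g y) (Ioi t)) :
    t * ∫ y in Ioi t, g y ≤ ∫ y in Ioi t, y * g y := by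
  rw [← integral_const_mul]
  exact setIntegral_mono_on (hg.const_mul t) hyg measurableSet_Ioi fun y hy =>
    mul_le_mul_of_nonneg_right (le_of_lt hy) (hg0 y)

lemma tendsto_mul_integral_Ioi_atTop (hg0 : ∀ y, 0 ≤ g y) (hg : IntegrableOn g (Ioi a))
    (hyg : IntegrableOn (fun y => y * g y) (Ioi a)) :
    Tendsto (fun t => t * ∫ y in Ioi t, g y) atTop (𝓝 0) := by
  refine squeeze_zero' ?_ ?_
    (tendsto_integral_Ioi_zero (f := fun y => y * g y) (μ := volume) tendsto_id)
  · filter_upwards [eventually_ge_atTop 0] with t ht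
    exact mul_nonneg ht (setIntegral_nonneg measurableSet_Ioi fun y _ => hg0 y)
  · filter_upwards [eventually_ge_atTop a] with t hat
    exact mul_integral_Ioi_le_integral_Ioi_mul hg0 (hg.mono_set (Ioi_subset_Ioi hat))
      (hyg.mono_set (Ioi_subset_Ioi hat))

end SetIntegral

section TruncatedExponentialMoment

variable {g : ℝ → ℝ} {t : ℝ}

lemma mul_integral_Ioc_le_integral_exp_sub_one_mul (c : ℝ) (hg0 : ∀ y, 0 ≤ g y)
    (hg : IntegrableOn g (Ioc 0 t)) :
    c * ∫ y in Ioc 0 t, y * g y ≤ ∫ y in Ioc 0 t, (exp (c * y) - 1) * g y := by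
  rw [← integral_const_mul]
  refine setIntegral_mono_on ((hg.continuous_mul_Ioc continuous_id).const_mul c)
    (hg.continuous_mul_Ioc (by fun_prop)) measurableSet_Ioc fun y _ => ?_
  rw [← mul_assoc]
  exact mul_le_mul_of_nonneg_right (by linarith [add_one_le_exp (c * y)]) (hg0 y)

lemma integral_exp_sub_one_mul_le {c : ℝ} (hc : 0 ≤ c) (hg0 : ∀ y, 0 ≤ g y)
    (hg : IntegrableOn g (Ioc 0 t)) :
    ∫ y in Ioc 0 t, (exp (c * y) - 1) * g y ≤ c * exp (c * t) * ∫ y in Ioc 0 t, y * g y := by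
  rw [← integral_const_mul]
  refine setIntegral_mono_on (hg.continuous_mul_Ioc (by fun_prop))
    ((hg.continuous_mul_Ioc continuous_id).const_mul _) measurableSet_Ioc fun y hy => ?_
  have hcy : 0 ≤ c * y := mul_nonneg hc hy.1.le
  calc (exp (c * y) - 1) * g y ≤ (c * y * exp (c * y)) * g y :=
        mul_le_mul_of_nonneg_right (exp_sub_one_le_mul_exp _) (hg0 y)
    _ ≤ (c * y * exp (c * t)) * g y :=
        mul_le_mul_of_nonneg_right (mul_le_mul_of_nonneg_left (exp_le_exp.2
          (mul_le_mul_of_nonneg_left hy.2 hc)) hcy) (hg0 y)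
    _ = c * exp (c * t) * (y * g y) := by ring

end TruncatedExponentialMoment

theorem cramer_root_asymptotics_general
    -- `g` is a probability density on `(0,∞)`
    (g : ℝ → ℝ) (hgnn : ∀ y, 0 ≤ g y)
    (hgprob : ∫ y in Set.Ioi (0:ℝ), g y = 1)
    (hgint : IntegrableOn g (Set.Ioi 0))
    -- finite positive mean `E U = 1/μ`
    (hmeanint : IntegrableOn (fun y => y * g y) (Set.Ioi 0))
    (μ : ℝ) (hμpos : 0 < μ) (hμ : ∫ y in Set.Ioi (0:ℝ), y * g y = 1 / μ)
    -- the tail `Ḡ`, positive everywhere (unbounded support)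
    (Gbar : ℝ → ℝ) (hGbar : ∀ t, Gbar t = ∫ y in Set.Ioi t, g y)
    (hGbarpos : ∀ t : ℝ, 0 < Gbar t)
    -- `γ t` is the unique positive root of `∫_0^t e^{γ y} g(y) dy = 1`
    (γ : ℝ → ℝ)
    (hγ : ∀ t : ℝ, 0 < t → 0 < γ t ∧
      ∫ y in Set.Ioc (0:ℝ) t, Real.exp (γ t * y) * g y = 1 ∧
      ∀ c : ℝ, 0 < c → (∫ y in Set.Ioc (0:ℝ) t, Real.exp (c * y) * g y = 1) → c = γ t) :
    Tendsto (fun t => γ t / (μ * Gbar t)) atTop (nhds 1) := by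
  set I : ℝ → ℝ := fun t => ∫ y in Ioc 0 t, y * g y
  have hg : ∀ t, IntegrableOn g (Ioc 0 t) := fun t => hgint.mono_set Ioc_subset_Ioi_self
  have hI : Tendsto I atTop (𝓝 (1 / μ)) := hμ ▸ tendsto_integral_Ioc_atTop hmeanint
  have hroot : ∀ t, 0 < t → ∫ y in Ioc 0 t, (exp (γ t * y) - 1) * g y = Gbar t := by
    intro t ht
    simp only [sub_mul, one_mul]
    rw [integral_sub ((hg t).continuous_mul_Ioc (by fun_prop)) (hg t), (hγ t ht).2.1, hGbar,
      ← hgprob, ← integral_Ioc_add_integral_Ioi hgint ht.le, add_sub_cancel_left]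
  have hlow : ∀ t, 0 < t → γ t * I t ≤ Gbar t := fun t ht =>
    hroot t ht ▸ mul_integral_Ioc_le_integral_exp_sub_one_mul _ hgnn (hg t)
  have hup : ∀ t, 0 < t → Gbar t ≤ γ t * I t * exp (γ t * t) := fun t ht => by
    rw [mul_right_comm, ← hroot t ht]
    exact integral_exp_sub_one_mul_le (hγ t ht).1.le hgnn (hg t)
  have htail : Tendsto (fun t => t * Gbar t) atTop (𝓝 0) := by
    simpa only [hGbar] using tendsto_mul_integral_Ioi_atTop hgnn hgint hmeanint
  have hγt : Tendsto (fun t => γ t * t) atTop (𝓝 0) :=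
    tendsto_mul_id_of_mul_le (by positivity) hI htail
      (eventually_gt_atTop 0 |>.mono fun t ht => (hγ t ht).1.le)
      (eventually_gt_atTop 0 |>.mono hlow)
  have hratio : Tendsto (fun t => γ t * I t / Gbar t) atTop (𝓝 1) :=
    tendsto_div_of_le_of_le_mul_exp (.of_forall hGbarpos)
      (eventually_gt_atTop 0 |>.mono hlow) (eventually_gt_atTop 0 |>.mono hup) hγt
  have hμI : Tendsto (fun t => (μ * I t)⁻¹) atTop (𝓝 1) := by
    simpa [hμpos.ne'] using (hI.const_mul μ).inv₀ (by simp [hμpos.ne'])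
  have hprod := hratio.mul hμI
  rw [mul_one] at hprod
  refine hprod.congr' ?_
  filter_upwards [hI.eventually (eventually_gt_nhds (by positivity))] with t hIt
  field_simp [(hGbarpos t).ne', hIt.ne', hμpos.ne']

/-- Lemma 4.1: for a distribution on `(0,∞)` with density `g`, finite
positive mean `1/μ` and unbounded support, the Cramér root `γ(t)` of the distribution
truncated to `[0,t]` satisfies `γ(t) ∼ μ Ḡ(t)` as `t → ∞`. -/
theorem cramer_root_asymptotics
    -- `g` is a probability density on `(0,∞)`
    (g : ℝ → ℝ) (hgmeas : Measurable g) (hgnn : ∀ y, 0 ≤ g y)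
    (hgsupp : ∀ y : ℝ, y ≤ 0 → g y = 0)
    (hgprob : ∫ y in Set.Ioi (0:ℝ), g y = 1)
    (hgint : IntegrableOn g (Set.Ioi 0))
    -- finite positive mean `E U = 1/μ`
    (hmeanint : IntegrableOn (fun y => y * g y) (Set.Ioi 0))
    (μ : ℝ) (hμpos : 0 < μ) (hμ : ∫ y in Set.Ioi (0:ℝ), y * g y = 1 / μ)
    -- the tail `Ḡ`, positive everywhere (unbounded support)
    (Gbar : ℝ → ℝ) (hGbar : ∀ t, Gbar t = ∫ y in Set.Ioi t, g y)
    (hGbarpos : ∀ t : ℝ, 0 < Gbar t)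
    -- `γ t` is the unique positive root of `∫_0^t e^{γ y} g(y) dy = 1`
    (γ : ℝ → ℝ)
    (hγ : ∀ t : ℝ, 0 < t → 0 < γ t ∧
      ∫ y in Set.Ioc (0:ℝ) t, Real.exp (γ t * y) * g y = 1 ∧
      ∀ c : ℝ, 0 < c → (∫ y in Set.Ioc (0:ℝ) t, Real.exp (c * y) * g y = 1) → c = γ t) :
    Tendsto (fun t => γ t / (μ * Gbar t)) atTop (nhds 1) :=
  cramer_root_asymptotics_general g hgnn hgprob hgint hmeanint μ hμpos hμ Gbar hGbar hGbarpos γ hγ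
end

section
/- For fixed constants a, b, γ, η > 0 and t_0 > 0, the integral I(z) = ∫_{t_0}^∞ exp(−e^{−b t^γ} z − a t^η) dt satisfies I(z) ≈_log exp(−a b^{−η/γ} (log z)^{η/γ}) as z → ∞, i.e. log I(z) / (−a b^{−η/γ} (log z)^{η/γ}) → 1 as z → ∞. -/
/-!
Put `T = (log z / b) ^ (1 / γ)`, the time at which `e^{-b t^γ} z = 1`. Before `T` the factor
`exp (-e^{-b t^γ} z)` is doubly exponentially small, after it the integrand is essentially
`exp (-a t^η)`, and `a T^η = a b^{-η/γ} (log z)^{η/γ}`. Integrating over `[T, T + 1]` gives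
`log I(z) ≥ -1 - a (T + 1)^η`. For the upper bound split at `S` with
`b S^γ = log z - K log log z`: on `(t₀, S]` the integrand is at most `exp (-(log z)^K)`, so for
`K` large this piece contributes at most `exp (-a S^η)`, and the tail `∫_S^∞ exp (-a t^η)` is
at most `(S + C) exp (-a S^η)` (cut it at `2 S`). Both bounds on `-log I(z)` are `a T^η (1 + o(1))`.
-/

open MeasureTheory Filter Real Set Topology

lemma mul_div_rpow_inv_rpow {b γ x : ℝ} (hb : 0 < b) (hγ : γ ≠ 0) (hx : 0 ≤ x) :
    b * ((x / b) ^ γ⁻¹) ^ γ = x := by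
  rw [rpow_inv_rpow (div_nonneg hx hb.le) hγ, mul_div_cancel₀ _ hb.ne']

lemma div_rpow_inv_rpow {b γ η x : ℝ} (hb : 0 < b) (hx : 0 ≤ x) :
    ((x / b) ^ γ⁻¹) ^ η = b ^ (-(η / γ)) * x ^ (η / γ) := by
  rw [← rpow_mul (div_nonneg hx hb.le), div_rpow hx hb.le, rpow_neg hb.le, inv_mul_eq_div]
  ring

lemma tendsto_div_rpow_inv_atTop {b γ : ℝ} (hb : 0 < b) (hγ : 0 < γ) :
    Tendsto (fun x => (x / b) ^ γ⁻¹) atTop atTop :=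
  (tendsto_rpow_atTop (inv_pos.2 hγ)).comp (tendsto_id.atTop_div_const hb)

lemma tendsto_one_sub_mul_log_div (K : ℝ) :
    Tendsto (fun l => 1 - K * log l / l) atTop (𝓝 1) := by
  simpa [mul_div_assoc] using
    ((tendsto_pow_log_div_mul_add_atTop 1 0 1 one_ne_zero).const_mul K).const_sub 1

lemma tendsto_sub_mul_log_atTop (K : ℝ) : Tendsto (fun l => l - K * log l) atTop atTop := by
  refine (tendsto_id.atTop_mul_pos one_pos (tendsto_one_sub_mul_log_div K)).congr' ?_
  filter_upwards [eventually_ne_atTop 0] with l hl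
  simp only [id]
  field_simp

lemma eventually_add_mul_rpow_add_mul_rpow_le_rpow {A B c q r K : ℝ} (hq : q < K) (hr : r < K)
    (hK : 0 < K) : ∀ᶠ l in atTop, A + B * l ^ q + c * l ^ r ≤ l ^ K := by
  have hlim : Tendsto (fun l => A * l ^ (-K) + B * l ^ (-(K - q)) + c * l ^ (-(K - r)))
      atTop (𝓝 0) := by
    simpa using (((tendsto_rpow_neg_atTop hK).const_mul A).add
      ((tendsto_rpow_neg_atTop (sub_pos.2 hq)).const_mul B)).add
      ((tendsto_rpow_neg_atTop (sub_pos.2 hr)).const_mul c)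
  filter_upwards [hlim.eventually (eventually_lt_nhds one_pos), eventually_gt_atTop 0]
    with l hl hl0
  calc A + B * l ^ q + c * l ^ r
      = (A * l ^ (-K) + B * l ^ (-(K - q)) + c * l ^ (-(K - r))) * l ^ K := by
        simp only [add_mul, mul_assoc, ← rpow_add hl0]
        ring_nf
        simp
    _ ≤ 1 * l ^ K := by gcongr
    _ = l ^ K := one_mul _

lemma tendsto_one_add_mul_add_one_rpow_div {a η : ℝ} (ha : 0 < a) (hη : 0 < η) :
    Tendsto (fun s : ℝ => (1 + a * (s + 1) ^ η) / (a * s ^ η)) atTop (𝓝 1) := by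
  have hinv : Tendsto (fun s : ℝ => (a * s ^ η)⁻¹) atTop (𝓝 0) :=
    ((tendsto_rpow_atTop hη).const_mul_atTop ha).inv_tendsto_atTop
  have hratio : Tendsto (fun s : ℝ => ((s + 1) / s) ^ η) atTop (𝓝 1) := by
    have h : Tendsto (fun s : ℝ => (s + 1) / s) atTop (𝓝 1) := by
      refine (by simpa using tendsto_inv_atTop_zero.const_add (1 : ℝ) :
        Tendsto (fun s : ℝ => 1 + s⁻¹) atTop (𝓝 1)).congr' ?_
      filter_upwards [eventually_ne_atTop 0] with s hs
      field_simp
    simpa using h.rpow_const (p := η) (Or.inl one_ne_zero)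
  have h := hinv.add hratio
  rw [zero_add] at h
  refine h.congr' ?_
  filter_upwards [eventually_gt_atTop 0] with s hs
  rw [div_rpow (by linarith) hs.le]
  field_simp

lemma tendsto_mul_sub_mul_log_rpow_sub_div {c p : ℝ} (hc : 0 < c) (hp : 0 < p) (K : ℝ) :
    Tendsto (fun l => (c * (l - K * log l) ^ p - K * log l) / (c * l ^ p)) atTop (𝓝 1) := by
  have hmain := (tendsto_one_sub_mul_log_div K).rpow_const (p := p) (Or.inl one_ne_zero)
  have hlog := ((isLittleO_log_rpow_atTop hp).tendsto_div_nhds_zero).const_mul (K / c)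
  have h := hmain.sub hlog
  rw [one_rpow, mul_zero, sub_zero] at h
  refine h.congr' ?_
  filter_upwards [eventually_gt_atTop 0,
    (tendsto_one_sub_mul_log_div K).eventually (eventually_gt_nhds one_pos)] with l hl hu
  have hfactor : l - K * log l = l * (1 - K * log l / l) := by field_simp
  rw [hfactor, mul_rpow hl.le hu.le]
  field_simp

lemma tendsto_one_add_mul_div_rpow_inv_add_one_rpow_div {a b γ η : ℝ} (ha : 0 < a) (hb : 0 < b)
    (hγ : 0 < γ) (hη : 0 < η) :
    Tendsto (fun l => (1 + a * ((l / b) ^ γ⁻¹ + 1) ^ η) / (a * b ^ (-(η / γ)) * l ^ (η / γ)))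
      atTop (𝓝 1) := by
  refine ((tendsto_one_add_mul_add_one_rpow_div ha hη).comp
    (tendsto_div_rpow_inv_atTop hb hγ)).congr' ?_
  filter_upwards [eventually_ge_atTop 0] with l hl
  rw [Function.comp_apply, div_rpow_inv_rpow hb hl, mul_assoc]

lemma integrableOn_Ioi_exp_neg_mul_rpow {c p : ℝ} (hc : 0 < c) (hp : 0 < p) :
    IntegrableOn (fun t : ℝ => exp (-(c * t ^ p))) (Ioi 0) := by
  simpa [neg_mul] using integrableOn_rpow_mul_exp_neg_mul_rpow (s := 0) (by norm_num) hp hc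

lemma setIntegral_Ioi_exp_neg_mul_rpow_le {a η S : ℝ} (ha : 0 < a) (hη : 0 < η) (hS : 0 ≤ S) :
    ∫ t in Ioi S, exp (-(a * t ^ η)) ≤
      (S + ∫ t in Ioi 0, exp (-(a * (1 - 2 ^ (-η)) * t ^ η))) * exp (-(a * S ^ η)) := by
  set c := a * (1 - 2 ^ (-η))
  have hc : 0 < c :=
    mul_pos ha (sub_pos.2 (rpow_lt_one_of_one_lt_of_neg one_lt_two (neg_neg_of_pos hη)))
  have hint := integrableOn_Ioi_exp_neg_mul_rpow ha hη
  have hnear : ∫ t in Ioc S (2 * S), exp (-(a * t ^ η)) ≤ S * exp (-(a * S ^ η)) := by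
    calc ∫ t in Ioc S (2 * S), exp (-(a * t ^ η))
        ≤ exp (-(a * S ^ η)) * volume.real (Ioc S (2 * S)) := by
          refine (Real.le_norm_self _).trans
            (norm_setIntegral_le_of_norm_le_const measure_Ioc_lt_top fun t ht => ?_)
          rw [norm_of_nonneg (exp_pos _).le]
          gcongr
          exact ht.1.le
      _ = S * exp (-(a * S ^ η)) := by
          rw [volume_real_Ioc_of_le (by linarith), mul_comm]; ring
  have hfar : ∫ t in Ioi (2 * S), exp (-(a * t ^ η)) ≤
      (∫ t in Ioi 0, exp (-(c * t ^ η))) * exp (-(a * S ^ η)) := by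
    have hpt : ∀ t ∈ Ioi (2 * S),
        exp (-(a * t ^ η)) ≤ exp (-(a * S ^ η)) * exp (-(c * t ^ η)) := by
      intro t ht
      have ht0 : 0 ≤ t := by linarith [mem_Ioi.1 ht]
      have hhalf : S ^ η ≤ (t / 2) ^ η := rpow_le_rpow hS (by linarith [mem_Ioi.1 ht]) hη.le
      have hc_eq : c * t ^ η = a * t ^ η - a * (t / 2) ^ η := by
        simp only [c, div_rpow ht0 zero_le_two, rpow_neg zero_le_two]; ring
      rw [← exp_add, exp_le_exp, ← neg_add, neg_le_neg_iff, hc_eq]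
      nlinarith
    have hsub : Ioi (2 * S) ⊆ Ioi 0 := Ioi_subset_Ioi (by linarith)
    calc ∫ t in Ioi (2 * S), exp (-(a * t ^ η))
        ≤ ∫ t in Ioi (2 * S), exp (-(a * S ^ η)) * exp (-(c * t ^ η)) :=
          setIntegral_mono_on (hint.mono_set hsub)
            (((integrableOn_Ioi_exp_neg_mul_rpow hc hη).mono_set hsub).const_mul _)
            measurableSet_Ioi hpt
      _ = exp (-(a * S ^ η)) * ∫ t in Ioi (2 * S), exp (-(c * t ^ η)) := integral_const_mul _ _
      _ ≤ exp (-(a * S ^ η)) * ∫ t in Ioi 0, exp (-(c * t ^ η)) := by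
          refine mul_le_mul_of_nonneg_left ?_ (exp_pos _).le
          exact setIntegral_mono_set (integrableOn_Ioi_exp_neg_mul_rpow hc hη)
            (ae_of_all _ fun _ => (exp_pos _).le) hsub.eventuallyLE
      _ = _ := mul_comm _ _
  have hS' : Ioi S ⊆ Ioi 0 := Ioi_subset_Ioi hS
  rw [← Ioc_union_Ioi_eq_Ioi (by linarith : S ≤ 2 * S),
    setIntegral_union (Ioc_disjoint_Ioi le_rfl) measurableSet_Ioi
      (hint.mono_set (Ioc_subset_Ioi_self.trans hS'))
      (hint.mono_set ((Ioi_subset_Ioi (by linarith)).trans hS'))]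
  linarith

noncomputable def doubleExpIntegral (a b γ η t₀ z : ℝ) : ℝ :=
  ∫ t in Ioi t₀, exp (-(exp (-(b * t ^ γ)) * z) - a * t ^ η)

section Bounds

variable {a b γ η t₀ z : ℝ}

lemma integrableOn_doubleExpIntegrand (ha : 0 < a) (hη : 0 < η) (ht₀ : 0 ≤ t₀) (hz : 0 ≤ z) :
    IntegrableOn (fun t => exp (-(exp (-(b * t ^ γ)) * z) - a * t ^ η)) (Ioi t₀) := by
  refine ((integrableOn_Ioi_exp_neg_mul_rpow ha hη).mono_set (Ioi_subset_Ioi ht₀)).mono'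
    (by fun_prop : Measurable _).aestronglyMeasurable (ae_of_all _ fun t => ?_)
  rw [norm_of_nonneg (exp_pos _).le, exp_le_exp]
  linarith [mul_nonneg (exp_pos (-(b * t ^ γ))).le hz]

lemma exp_le_doubleExpIntegral (ha : 0 < a) (hb : 0 ≤ b) (hγ : 0 ≤ γ) (hη : 0 < η) (ht₀ : 0 ≤ t₀)
    (hz : 0 ≤ z) {T : ℝ} (hT : t₀ ≤ T) :
    exp (-(exp (-(b * T ^ γ)) * z) - a * (T + 1) ^ η) ≤ doubleExpIntegral a b γ η t₀ z := by
  have hint := integrableOn_doubleExpIntegrand (b := b) (γ := γ) ha hη ht₀ hz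
  have hsub : Ioc T (T + 1) ⊆ Ioi t₀ := fun t ht => hT.trans_lt ht.1
  calc exp (-(exp (-(b * T ^ γ)) * z) - a * (T + 1) ^ η)
      = exp (-(exp (-(b * T ^ γ)) * z) - a * (T + 1) ^ η) * volume.real (Ioc T (T + 1)) := by
        rw [volume_real_Ioc_of_le (by linarith)]; ring
    _ ≤ ∫ t in Ioc T (T + 1), exp (-(exp (-(b * t ^ γ)) * z) - a * t ^ η) := by
        refine setIntegral_ge_of_const_le_real measurableSet_Ioc measure_Ioc_lt_top.ne
          (fun t ht => ?_) (hint.mono_set hsub)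
        have hT0 : 0 ≤ T := ht₀.trans hT
        have hTt : T ≤ t := ht.1.le
        have htT : t ≤ T + 1 := ht.2
        have ht0 : 0 ≤ t := hT0.trans hTt
        gcongr
    _ ≤ doubleExpIntegral a b γ η t₀ z :=
        setIntegral_mono_set hint (ae_of_all _ fun _ => (exp_pos _).le) hsub.eventuallyLE

lemma doubleExpIntegral_pos (ha : 0 < a) (hb : 0 ≤ b) (hγ : 0 ≤ γ) (hη : 0 < η) (ht₀ : 0 ≤ t₀)
    (hz : 0 ≤ z) : 0 < doubleExpIntegral a b γ η t₀ z :=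
  (exp_pos _).trans_le (exp_le_doubleExpIntegral ha hb hγ hη ht₀ hz le_rfl)

lemma doubleExpIntegral_le_add (ha : 0 < a) (hb : 0 ≤ b) (hγ : 0 ≤ γ) (hη : 0 < η)
    (ht₀ : 0 ≤ t₀) (hz : 0 ≤ z) {S : ℝ} (hS : t₀ ≤ S) :
    doubleExpIntegral a b γ η t₀ z ≤
      S * exp (-(exp (-(b * S ^ γ)) * z)) + ∫ t in Ioi S, exp (-(a * t ^ η)) := by
  have hint := integrableOn_doubleExpIntegrand (b := b) (γ := γ) ha hη ht₀ hz
  have hinit : ∫ t in Ioc t₀ S, exp (-(exp (-(b * t ^ γ)) * z) - a * t ^ η) ≤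
      S * exp (-(exp (-(b * S ^ γ)) * z)) := by
    calc ∫ t in Ioc t₀ S, exp (-(exp (-(b * t ^ γ)) * z) - a * t ^ η)
        ≤ exp (-(exp (-(b * S ^ γ)) * z)) * volume.real (Ioc t₀ S) := by
          refine (Real.le_norm_self _).trans
            (norm_setIntegral_le_of_norm_le_const measure_Ioc_lt_top fun t ht => ?_)
          have ht0 : 0 ≤ t := ht₀.trans ht.1.le
          have htS : t ≤ S := ht.2
          have hdecay : exp (-(b * S ^ γ)) * z ≤ exp (-(b * t ^ γ)) * z := by gcongr
          rw [norm_of_nonneg (exp_pos _).le, exp_le_exp]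
          nlinarith [rpow_nonneg ht0 η]
      _ ≤ S * exp (-(exp (-(b * S ^ γ)) * z)) := by
          rw [volume_real_Ioc_of_le hS, mul_comm]
          gcongr
          linarith
  have htail : ∫ t in Ioi S, exp (-(exp (-(b * t ^ γ)) * z) - a * t ^ η) ≤
      ∫ t in Ioi S, exp (-(a * t ^ η)) :=
    setIntegral_mono_on (hint.mono_set (Ioi_subset_Ioi hS))
      ((integrableOn_Ioi_exp_neg_mul_rpow ha hη).mono_set (Ioi_subset_Ioi (ht₀.trans hS)))
      measurableSet_Ioi fun t _ => by
        rw [exp_le_exp]; linarith [mul_nonneg (exp_pos (-(b * t ^ γ))).le hz]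
  rw [doubleExpIntegral, ← Ioc_union_Ioi_eq_Ioi hS,
    setIntegral_union (Ioc_disjoint_Ioi le_rfl) measurableSet_Ioi
      (hint.mono_set Ioc_subset_Ioi_self) (hint.mono_set (Ioi_subset_Ioi hS))]
  linarith

lemma log_doubleExpIntegral_le (ha : 0 < a) (hb : 0 ≤ b) (hγ : 0 ≤ γ) (hη : 0 < η)
    (ht₀ : 0 ≤ t₀) (hz : 0 ≤ z) {S M : ℝ} (hS : t₀ ≤ S) (hSM : exp M ≤ exp (-(b * S ^ γ)) * z)
    (hM : 1 + S + (∫ t in Ioi 0, exp (-(a * (1 - 2 ^ (-η)) * t ^ η))) + a * S ^ η ≤ exp M) :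
    log (doubleExpIntegral a b γ η t₀ z) ≤ M - a * S ^ η := by
  set C := ∫ t in Ioi 0, exp (-(a * (1 - 2 ^ (-η)) * t ^ η))
  have hC : 0 ≤ C := setIntegral_nonneg measurableSet_Ioi fun _ _ => (exp_pos _).le
  have hS0 : 0 ≤ S := ht₀.trans hS
  have hinit : S * exp (-(exp (-(b * S ^ γ)) * z)) ≤ exp (-(a * S ^ η)) := by
    calc S * exp (-(exp (-(b * S ^ γ)) * z)) ≤ exp (exp M - a * S ^ η) * exp (-exp M) := by
          gcongr
          linarith [add_one_le_exp (exp M - a * S ^ η)]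
      _ = exp (-(a * S ^ η)) := by rw [← exp_add]; ring_nf
  have hsplit := doubleExpIntegral_le_add ha hb hγ hη ht₀ hz hS
  have htail := setIntegral_Ioi_exp_neg_mul_rpow_le ha hη hS0
  rw [log_le_iff_le_exp (doubleExpIntegral_pos ha hb hγ hη ht₀ hz), sub_eq_add_neg, exp_add]
  calc doubleExpIntegral a b γ η t₀ z ≤ (1 + S + C) * exp (-(a * S ^ η)) := by linarith
    _ ≤ exp M * exp (-(a * S ^ η)) := by
        gcongr
        linarith [mul_nonneg ha.le (rpow_nonneg hS0 η)]

end Bounds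

section Asymptotics

variable {a b γ η t₀ : ℝ}

lemma eventually_neg_log_doubleExpIntegral_le (ha : 0 < a) (hb : 0 < b) (hγ : 0 < γ)
    (hη : 0 < η) (ht₀ : 0 ≤ t₀) :
    ∀ᶠ z in atTop,
      -log (doubleExpIntegral a b γ η t₀ z) ≤ 1 + a * ((log z / b) ^ γ⁻¹ + 1) ^ η := by
  filter_upwards [((tendsto_div_rpow_inv_atTop hb hγ).comp tendsto_log_atTop).eventually_ge_atTop
    t₀, eventually_ge_atTop 1] with z hT hz
  have hz0 : 0 < z := by linarith
  have h := exp_le_doubleExpIntegral ha hb.le hγ.le hη ht₀ hz0.le hT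
  rw [Function.comp_apply, mul_div_rpow_inv_rpow hb hγ.ne' (log_nonneg hz), exp_neg,
    exp_log hz0, inv_mul_cancel₀ hz0.ne'] at h
  linarith [(le_log_iff_exp_le (doubleExpIntegral_pos ha hb.le hγ.le hη ht₀ hz0.le)).2 h]

lemma exists_eventually_le_neg_log_doubleExpIntegral (ha : 0 < a) (hb : 0 < b) (hγ : 0 < γ)
    (hη : 0 < η) (ht₀ : 0 ≤ t₀) :
    ∃ K, ∀ᶠ z in atTop, a * b ^ (-(η / γ)) * (log z - K * log (log z)) ^ (η / γ) -
      K * log (log z) ≤ -log (doubleExpIntegral a b γ η t₀ z) := by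
  set C := ∫ t in Ioi 0, exp (-(a * (1 - 2 ^ (-η)) * t ^ η))
  set K := η / γ + γ⁻¹ + 1
  have hK : 0 < K := by positivity
  refine ⟨K, ?_⟩
  have hdom : ∀ᶠ l in atTop,
      1 + C + (b ^ γ⁻¹)⁻¹ * l ^ γ⁻¹ + a * b ^ (-(η / γ)) * l ^ (η / γ) ≤ l ^ K :=
    eventually_add_mul_rpow_add_mul_rpow_le_rpow (by linarith [div_pos hη hγ])
      (by linarith [inv_pos.2 hγ]) hK
  have hx := tendsto_sub_mul_log_atTop K
  have hlog := tendsto_log_atTop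
  filter_upwards [hlog.eventually (eventually_ge_atTop 1),
    hlog.eventually (hx.eventually_ge_atTop 0),
    hlog.eventually (((tendsto_div_rpow_inv_atTop hb hγ).comp hx).eventually_ge_atTop t₀),
    hlog.eventually hdom, eventually_gt_atTop 0] with z hl1 hx0 hS hpoly hz
  rw [Function.comp_apply] at hS
  set l := log z
  set x := l - K * log l
  set S := (x / b) ^ γ⁻¹
  have hl0 : 0 ≤ l := by linarith
  have hbS : b * S ^ γ = x := mul_div_rpow_inv_rpow hb hγ.ne' hx0
  have hSl : S ≤ (l / b) ^ γ⁻¹ := by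
    have hxl : x ≤ l := by linarith [mul_nonneg hK.le (log_nonneg hl1)]
    exact rpow_le_rpow (div_nonneg hx0 hb.le) (div_le_div_of_nonneg_right hxl hb.le)
      (inv_nonneg.2 hγ.le)
  have hupper := log_doubleExpIntegral_le (M := K * log l) ha hb.le hγ.le hη ht₀ hz.le hS ?_ ?_
  · rw [div_rpow_inv_rpow hb hx0] at hupper
    linarith
  · rw [hbS, ← exp_log hz, ← exp_add]
    exact le_of_eq (by congr 1; ring)
  · calc 1 + S + C + a * S ^ η ≤ 1 + C + (l / b) ^ γ⁻¹ + a * ((l / b) ^ γ⁻¹) ^ η := by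
          have : S ^ η ≤ ((l / b) ^ γ⁻¹) ^ η := by gcongr
          nlinarith
      _ = 1 + C + (b ^ γ⁻¹)⁻¹ * l ^ γ⁻¹ + a * b ^ (-(η / γ)) * l ^ (η / γ) := by
          rw [div_rpow_inv_rpow hb hl0, div_rpow hl0 hb.le]
          ring
      _ ≤ l ^ K := hpoly
      _ = exp (K * log l) := by rw [rpow_def_of_pos (by linarith), mul_comm]

end Asymptotics

/-- Lemma 5.1: for constants `a, b, γ, η > 0` and `t₀ > 0`,
`∫_{t₀}^∞ exp(−e^{−b t^γ} z − a t^η) dt ≈_log exp(−a b^{−η/γ} (log z)^{η/γ})`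
as `z → ∞`. -/
theorem integral_log_asymp_doubly_exponential
    (a b γ η t₀ : ℝ) (ha : 0 < a) (hb : 0 < b) (hγ : 0 < γ) (hη : 0 < η)
    (ht₀ : 0 < t₀) :
    Tendsto (fun z =>
        Real.log (∫ t in Set.Ioi t₀,
            Real.exp (-(Real.exp (-(b * t ^ γ)) * z) - a * t ^ η)) /
          (-(a * b ^ (-(η / γ)) * Real.log z ^ (η / γ))))
      atTop (nhds 1) := by
  change Tendsto (fun z => log (doubleExpIntegral a b γ η t₀ z) /
    -(a * b ^ (-(η / γ)) * log z ^ (η / γ))) atTop (𝓝 1)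
  obtain ⟨K, hupper⟩ := exists_eventually_le_neg_log_doubleExpIntegral ha hb hγ hη ht₀.le
  have hlower := eventually_neg_log_doubleExpIntegral_le ha hb hγ hη ht₀.le
  have hrate : ∀ᶠ z in atTop, 0 < a * b ^ (-(η / γ)) * log z ^ (η / γ) := by
    filter_upwards [tendsto_log_atTop.eventually_gt_atTop 0] with z hz
    positivity
  refine tendsto_of_tendsto_of_tendsto_of_le_of_le'
    ((tendsto_mul_sub_mul_log_rpow_sub_div (c := a * b ^ (-(η / γ))) (by positivity)
      (div_pos hη hγ) K).comp tendsto_log_atTop)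
    ((tendsto_one_add_mul_div_rpow_inv_add_one_rpow_div ha hb hγ hη).comp tendsto_log_atTop)
    ?_ ?_
  · filter_upwards [hupper, hrate] with z h hz
    simpa only [Function.comp_apply, div_neg, neg_div] using div_le_div_of_nonneg_right h hz.le
  · filter_upwards [hlower, hrate] with z h hz
    simpa only [Function.comp_apply, div_neg, neg_div] using div_le_div_of_nonneg_right h hz.le
end

section
/- For fixed constants η > 0, a > 0, b > 0 and t_0 > 0, the integral I(z) = ∫_{t_0}^∞ exp(−t^{−b} z − a t^η) dt satisfies I(z) ≈_log exp(−c_{12} z^{θ_{12}}) as z → ∞, where θ_{12} = η/(b+η) and c_{12} = a^{1−θ_{12}} [(η/b)^{1−θ_{12}} + (b/η)^{θ_{12}}]; i.e. log I(z) / (−c_{12} z^{θ_{12}}) → 1 as z → ∞. -/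
/-!
For fixed `z > 0` the exponent `φ(t) = t ^ (-b) * z + a * t ^ η` is minimized over `t > 0` at
`T ≍ z ^ (1 / (b + η))`, with minimum `c₁₂ z ^ θ₁₂`; the minimality is the weighted AM–GM
inequality `b + η ≤ η s ^ (-b) + b s ^ η` after rescaling `t = s T`.

Lower bound: for `x > 1` put `r = x ^ (1 / η)`. On `[T, r T]` the exponent is at most
`x φ(T)`, and the interval has length `(r - 1) T → ∞`, so eventually `I(z) ≥ exp (-x c₁₂ z ^ θ₁₂)`.

Upper bound: for `0 < x < 1` split `a t ^ η = x a t ^ η + (1 - x) a t ^ η`. The first part together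
with `t ^ (-b) z` is at least `c₁₂(x a) z ^ θ₁₂ = x ^ (1 - θ₁₂) c₁₂ z ^ θ₁₂ ≥ x c₁₂ z ^ θ₁₂`, and
the second leaves a finite integral independent of `z`.
-/

open MeasureTheory Filter Real Set

/-- The constant `c₁₂` as a function of `a`, with `θ₁₂ = η / (b + η)`. -/
noncomputable def rateConst (a b η : ℝ) : ℝ :=
  a ^ (1 - η / (b + η)) * ((η / b) ^ (1 - η / (b + η)) + (b / η) ^ (η / (b + η)))

/-- The minimizer of `t ↦ t ^ (-b) * z + a * t ^ η` on `t > 0`. -/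
noncomputable def saddlePoint (a b η z : ℝ) : ℝ := (b * z / (a * η)) ^ (1 / (b + η))

lemma rateConst_pos {a b η : ℝ} (ha : 0 < a) (hb : 0 < b) (hη : 0 < η) :
    0 < rateConst a b η := by
  unfold rateConst; positivity

lemma rateConst_mul_left {s a : ℝ} (b η : ℝ) (hs : 0 ≤ s) (ha : 0 ≤ a) :
    rateConst (s * a) b η = s ^ (1 - η / (b + η)) * rateConst a b η := by
  rw [rateConst, rateConst, mul_rpow hs ha, mul_assoc]

section Minimization

variable {a b η z : ℝ}

lemma add_le_mul_rpow_neg_add_mul_rpow (hb : 0 < b) (hη : 0 < η) {s : ℝ} (hs : 0 < s) :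
    b + η ≤ η * s ^ (-b) + b * s ^ η := by
  have hbη : 0 < b + η := by positivity
  have h := geom_mean_le_arith_mean2_weighted (div_pos hη hbη).le (div_pos hb hbη).le
    (rpow_pos_of_pos hs (-b)).le (rpow_pos_of_pos hs η).le (by field_simp; ring)
  rw [← rpow_mul hs.le, ← rpow_mul hs.le, ← rpow_add hs,
    show -b * (η / (b + η)) + η * (b / (b + η)) = 0 by ring, rpow_zero, div_mul_eq_mul_div,
    div_mul_eq_mul_div, ← add_div, le_div_iff₀ hbη, one_mul] at h
  exact h

lemma saddlePoint_pos (ha : 0 < a) (hb : 0 < b) (hη : 0 < η) (hz : 0 < z) :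
    0 < saddlePoint a b η z := by
  unfold saddlePoint; positivity

lemma saddlePoint_rpow_neg_mul (ha : 0 < a) (hb : 0 < b) (hη : 0 < η) (hz : 0 < z) :
    saddlePoint a b η z ^ (-b) * z = a * saddlePoint a b η z ^ η * η / b := by
  have hT := saddlePoint_pos ha hb hη hz
  have hpow : saddlePoint a b η z ^ (b + η) = b * z / (a * η) := by
    rw [saddlePoint, ← rpow_mul (by positivity), one_div_mul_cancel (by positivity), rpow_one]
  rw [show -b = η - (b + η) by ring, rpow_sub hT, hpow]
  field_simp

lemma saddlePoint_value (ha : 0 < a) (hb : 0 < b) (hη : 0 < η) (hz : 0 < z) :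
    saddlePoint a b η z ^ (-b) * z + a * saddlePoint a b η z ^ η
      = rateConst a b η * z ^ (η / (b + η)) := by
  set θ := η / (b + η)
  have hK : (η / b) ^ (1 - θ) + (b / η) ^ θ = (b + η) / b * (b / η) ^ θ := by
    rw [rpow_sub (by positivity), rpow_one, div_eq_mul_inv (η / b), ← inv_rpow (by positivity),
      inv_div]
    field_simp
    ring
  have hTη : saddlePoint a b η z ^ η = (b / η) ^ θ * a ^ (-θ) * z ^ θ := by
    rw [saddlePoint, ← rpow_mul (by positivity), one_div_mul_eq_div,
      show b * z / (a * η) = b / η * a⁻¹ * z by field_simp, mul_rpow (by positivity) hz.le,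
      mul_rpow (by positivity) (by positivity), inv_rpow ha.le, ← rpow_neg ha.le]
  rw [saddlePoint_rpow_neg_mul ha hb hη hz, rateConst, hK, hTη, rpow_sub ha, rpow_one,
    rpow_neg ha.le]
  field_simp
  ring

lemma rateConst_mul_rpow_le (ha : 0 < a) (hb : 0 < b) (hη : 0 < η) (hz : 0 < z) {t : ℝ}
    (ht : 0 < t) : rateConst a b η * z ^ (η / (b + η)) ≤ t ^ (-b) * z + a * t ^ η := by
  set T := saddlePoint a b η z
  have hT : 0 < T := saddlePoint_pos ha hb hη hz
  have hbal : T ^ (-b) * z = a * T ^ η * η / b := saddlePoint_rpow_neg_mul ha hb hη hz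
  set s := t / T
  have hts : t = s * T := (div_mul_cancel₀ t hT.ne').symm
  have hs : 0 < s := div_pos ht hT
  rw [← saddlePoint_value ha hb hη hz]
  calc T ^ (-b) * z + a * T ^ η = a * T ^ η / b * (b + η) := by
        rw [hbal]; field_simp; ring
    _ ≤ a * T ^ η / b * (η * s ^ (-b) + b * s ^ η) :=
        mul_le_mul_of_nonneg_left (add_le_mul_rpow_neg_add_mul_rpow hb hη hs) (by positivity)
    _ = t ^ (-b) * z + a * t ^ η := by
        rw [hts, mul_rpow hs.le hT.le, mul_rpow hs.le hT.le, mul_assoc, hbal]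
        field_simp

end Minimization

section IntegralBounds

variable {a b η t₀ z : ℝ}

lemma integrableOn_Ioi_exp_neg_mul_rpow_s19 (ht₀ : 0 ≤ t₀) (ha : 0 < a) (hη : 0 < η) :
    IntegrableOn (fun t => exp (-(a * t ^ η))) (Ioi t₀) := by
  refine ((integrableOn_rpow_mul_exp_neg_mul_rpow neg_one_lt_zero hη ha).mono_set
    (Ioi_subset_Ioi ht₀)).congr_fun (fun t _ => ?_) measurableSet_Ioi
  simp [neg_mul]

lemma integrableOn_Ioi_exp_neg_rpow_neg_mul_sub (ht₀ : 0 ≤ t₀) (ha : 0 < a) (hη : 0 < η)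
    (hz : 0 ≤ z) : IntegrableOn (fun t => exp (-(t ^ (-b) * z) - a * t ^ η)) (Ioi t₀) := by
  refine (integrableOn_Ioi_exp_neg_mul_rpow_s19 ht₀ ha hη).mono' (by fun_prop) ?_
  filter_upwards [self_mem_ae_restrict measurableSet_Ioi] with t ht
  have : 0 ≤ t ^ (-b) * z := mul_nonneg (rpow_nonneg (ht₀.trans ht.le) _) hz
  rw [norm_of_nonneg (exp_pos _).le]
  exact exp_le_exp.2 (by linarith)

lemma mul_exp_le_integral (ht₀ : 0 ≤ t₀) (ha : 0 < a) (hb : 0 ≤ b) (hη : 0 < η) (hz : 0 ≤ z)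
    {u v : ℝ} (hu₀ : 0 < u) (hu : t₀ ≤ u) (huv : u ≤ v) :
    (v - u) * exp (-(u ^ (-b) * z) - a * v ^ η)
      ≤ ∫ t in Ioi t₀, exp (-(t ^ (-b) * z) - a * t ^ η) := by
  have hint := integrableOn_Ioi_exp_neg_rpow_neg_mul_sub (b := b) ht₀ ha hη hz
  have hsub : Ioc u v ⊆ Ioi t₀ := fun t ht => hu.trans_lt ht.1
  calc (v - u) * exp (-(u ^ (-b) * z) - a * v ^ η)
      = ∫ _ in Ioc u v, exp (-(u ^ (-b) * z) - a * v ^ η) := by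
        rw [setIntegral_const, measureReal_def, volume_Ioc, smul_eq_mul,
          ENNReal.toReal_ofReal (sub_nonneg.2 huv)]
    _ ≤ ∫ t in Ioc u v, exp (-(t ^ (-b) * z) - a * t ^ η) := by
        refine setIntegral_mono_on (integrableOn_const measure_Ioc_lt_top.ne)
          (hint.mono_set hsub) measurableSet_Ioc fun t ht => exp_le_exp.2 ?_
        have h₁ : t ^ (-b) ≤ u ^ (-b) := rpow_le_rpow_of_nonpos hu₀ ht.1.le (neg_nonpos.2 hb)
        have h₂ : t ^ η ≤ v ^ η := rpow_le_rpow (hu₀.trans ht.1).le ht.2 hη.le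
        nlinarith
    _ ≤ ∫ t in Ioi t₀, exp (-(t ^ (-b) * z) - a * t ^ η) :=
        setIntegral_mono_set hint (Eventually.of_forall fun _ => (exp_pos _).le)
          hsub.eventuallyLE

lemma integral_exp_neg_rpow_neg_mul_sub_pos (ht₀ : 0 < t₀) (ha : 0 < a) (hb : 0 ≤ b)
    (hη : 0 < η) (hz : 0 ≤ z) : 0 < ∫ t in Ioi t₀, exp (-(t ^ (-b) * z) - a * t ^ η) := by
  refine lt_of_lt_of_le ?_
    (mul_exp_le_integral ht₀.le ha hb hη hz ht₀ le_rfl (le_add_of_nonneg_right zero_le_one))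
  rw [add_sub_cancel_left, one_mul]
  exact exp_pos _

lemma integral_le_exp_mul_integral (ht₀ : 0 ≤ t₀) (hb : 0 < b) (hη : 0 < η) (hz : 0 < z)
    {a₁ a₂ : ℝ} (ha₁ : 0 < a₁) (ha₂ : 0 < a₂) (ha : a₁ + a₂ = a) :
    ∫ t in Ioi t₀, exp (-(t ^ (-b) * z) - a * t ^ η)
      ≤ exp (-(rateConst a₁ b η * z ^ (η / (b + η)))) * ∫ t in Ioi t₀, exp (-(a₂ * t ^ η)) := by
  rw [← integral_const_mul]
  refine setIntegral_mono_on
    (integrableOn_Ioi_exp_neg_rpow_neg_mul_sub ht₀ (by linarith) hη hz.le)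
    ((integrableOn_Ioi_exp_neg_mul_rpow_s19 ht₀ ha₂ hη).const_mul _) measurableSet_Ioi fun t ht => ?_
  rw [← exp_add, exp_le_exp, ← ha]
  have := rateConst_mul_rpow_le ha₁ hb hη hz (ht₀.trans_lt ht)
  linarith

end IntegralBounds

lemma tendsto_div_nhds_one_of_bounds {α : Type*} {l : Filter α} {f g : α → ℝ}
    (hg : Tendsto g l atTop) (hlow : ∀ x, 0 < x → x < 1 → ∃ C, ∀ᶠ z in l, x * g z - C ≤ f z)
    (hup : ∀ x, 1 < x → ∀ᶠ z in l, f z ≤ x * g z) :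
    Tendsto (fun z => f z / g z) l (nhds 1) := by
  rw [tendsto_order]
  refine ⟨fun x hx => ?_, fun x hx => ?_⟩
  · obtain ⟨y, hy, hy₁⟩ := exists_between (max_lt hx one_pos)
    have hxy : x < y := (le_max_left x 0).trans_lt hy
    obtain ⟨C, hC⟩ := hlow y ((le_max_right x 0).trans_lt hy) hy₁
    filter_upwards [hC, hg.eventually_gt_atTop (max 0 (C / (y - x)))] with z hfz hgz
    have hg₀ : 0 < g z := (le_max_left _ _).trans_lt hgz
    have hCg : C < (y - x) * g z := by
      rw [← div_lt_iff₀' (sub_pos.2 hxy)]; exact (le_max_right _ _).trans_lt hgz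
    rw [lt_div_iff₀ hg₀]
    linarith
  · filter_upwards [hup ((1 + x) / 2) (by linarith), hg.eventually_gt_atTop 0] with z hfz hg₀
    rw [div_lt_iff₀ hg₀]
    nlinarith

section Asymptotics

variable {a b η t₀ : ℝ}

lemma eventually_neg_log_integral_le (ht₀ : 0 < t₀) (ha : 0 < a) (hb : 0 < b) (hη : 0 < η)
    {x : ℝ} (hx : 1 < x) :
    ∀ᶠ z in atTop, -log (∫ t in Ioi t₀, exp (-(t ^ (-b) * z) - a * t ^ η))
      ≤ x * (rateConst a b η * z ^ (η / (b + η))) := by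
  set r := x ^ (1 / η)
  have hr : 1 < r := one_lt_rpow hx (by positivity)
  have hrη : r ^ η = x := by
    rw [← rpow_mul (by linarith), one_div_mul_cancel hη.ne', rpow_one]
  have hT : Tendsto (saddlePoint a b η) atTop atTop :=
    (tendsto_rpow_atTop (by positivity)).comp
      ((tendsto_id.const_mul_atTop hb).atTop_div_const (by positivity))
  filter_upwards [eventually_gt_atTop 0, hT.eventually_ge_atTop t₀,
    (hT.const_mul_atTop (sub_pos.2 hr)).eventually_ge_atTop 1] with z hz hTt₀ hT₁
  set T := saddlePoint a b η z
  have hT₀ : 0 < T := saddlePoint_pos ha hb hη hz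
  have hI := integral_exp_neg_rpow_neg_mul_sub_pos ht₀ ha hb.le hη hz.le
  have hTz : 0 ≤ T ^ (-b) * z := mul_nonneg (rpow_nonneg hT₀.le _) hz.le
  rw [neg_le, ← saddlePoint_value ha hb hη hz, le_log_iff_exp_le hI]
  calc exp (-(x * (T ^ (-b) * z + a * T ^ η)))
      ≤ exp (-(T ^ (-b) * z) - a * (r * T) ^ η) := by
        rw [exp_le_exp, mul_rpow (by linarith) hT₀.le, hrη]
        nlinarith
    _ ≤ (r * T - T) * exp (-(T ^ (-b) * z) - a * (r * T) ^ η) :=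
        le_mul_of_one_le_left (exp_pos _).le (by linarith)
    _ ≤ ∫ t in Ioi t₀, exp (-(t ^ (-b) * z) - a * t ^ η) :=
        mul_exp_le_integral ht₀.le ha hb.le hη hz.le hT₀ hTt₀ (by nlinarith)

lemma exists_neg_log_integral_ge (ht₀ : 0 < t₀) (ha : 0 < a) (hb : 0 < b) (hη : 0 < η)
    {x : ℝ} (hx₀ : 0 < x) (hx₁ : x < 1) :
    ∃ C, ∀ᶠ z in atTop, x * (rateConst a b η * z ^ (η / (b + η))) - C
      ≤ -log (∫ t in Ioi t₀, exp (-(t ^ (-b) * z) - a * t ^ η)) := by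
  set J := ∫ t in Ioi t₀, exp (-((1 - x) * a * t ^ η))
  refine ⟨log J, ?_⟩
  filter_upwards [eventually_gt_atTop 0] with z hz
  have hI := integral_exp_neg_rpow_neg_mul_sub_pos ht₀ ha hb.le hη hz.le
  have hIJ := integral_le_exp_mul_integral (a := a) ht₀.le hb hη hz (mul_pos hx₀ ha)
    (mul_pos (sub_pos.2 hx₁) ha) (by ring)
  have hJ : 0 < J := pos_of_mul_pos_right (hI.trans_le hIJ) (exp_pos _).le
  have hlog := log_le_log hI hIJ
  rw [log_mul (exp_pos _).ne' hJ.ne', log_exp] at hlog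
  have hc : x * rateConst a b η ≤ rateConst (x * a) b η := by
    rw [rateConst_mul_left b η hx₀.le ha.le]
    refine mul_le_mul_of_nonneg_right ?_ (rateConst_pos ha hb hη).le
    simpa using rpow_le_rpow_of_exponent_ge hx₀ hx₁.le
      (sub_le_self 1 (by positivity : 0 ≤ η / (b + η)))
  have := mul_le_mul_of_nonneg_right hc (rpow_nonneg hz.le (η / (b + η)))
  linarith

end Asymptotics

/-- Lemma 5.4: for constants `η, a, b > 0` and `t₀ > 0`,
`∫_{t₀}^∞ exp(−t^{−b} z − a t^η) dt ≈_log exp(−c₁₂ z^{θ₁₂})` as `z → ∞`, where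
`θ₁₂ = η/(b+η)` and `c₁₂ = a^{1−θ₁₂} [(η/b)^{1−θ₁₂} + (b/η)^{θ₁₂}]`. -/
theorem integral_log_asymp_power
    (a b η t₀ : ℝ) (ha : 0 < a) (hb : 0 < b) (hη : 0 < η) (ht₀ : 0 < t₀) :
    Tendsto (fun z =>
        Real.log (∫ t in Set.Ioi t₀, Real.exp (-(t ^ (-b) * z) - a * t ^ η)) /
          (-(a ^ (1 - η / (b + η))
              * ((η / b) ^ (1 - η / (b + η)) + (b / η) ^ (η / (b + η)))
            * z ^ (η / (b + η)))))
      atTop (nhds 1) := by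
  refine (tendsto_div_nhds_one_of_bounds
    ((tendsto_rpow_atTop (by positivity)).const_mul_atTop (rateConst_pos ha hb hη))
    (fun x hx₀ hx₁ => exists_neg_log_integral_ge ht₀ ha hb hη hx₀ hx₁)
    (fun x hx => eventually_neg_log_integral_le ht₀ ha hb hη hx)).congr fun z => ?_
  rw [neg_div, div_neg]
  rfl
end
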